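/- There is no one-layer spiking neural network with a single genuine input neuron (plus arbitrarily many auxiliary input neurons firing at constant times) and one output neuron whose firing-time map equals f₁(x) = x + c₁ for x > 0 and f₁(x) = c₁ for x ≤ 0 on an interval [a,b] with a < 0 < b. -/
import Mathlib


/-- `FiresAt w dl θ t τ`: in the Spike Response Model with linear response, the
output neuron with incoming weights `w`, delays `dl` and threshold `θ` fires at
time `τ` on input firing times `t`; i.e. there is a nonempty causal subset `S`
with positive weight sum whose spikes arrive strictly before `τ`, all other
spikes arrive no earlier than `τ`, and `τ` is given by the SRM formula. -/
def FiresAt {n : ℕ} (w dl : Fin n → ℝ) (θ : ℝ) (t : Fin n → ℝ) (τ : ℝ) : Prop :=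
  ∃ S : Finset (Fin n), S.Nonempty ∧ 0 < ∑ i ∈ S, w i ∧
    (∀ k ∈ S, t k + dl k < τ) ∧ (∀ k ∉ S, τ ≤ t k + dl k) ∧
    τ = (θ + ∑ i ∈ S, w i * (t i + dl i)) / (∑ i ∈ S, w i)

/-- no one-layer SNN with one genuine input neuron (firing at time
`x`) and arbitrarily many auxiliary input neurons firing at constant times has
firing-time map `f₁(x) = x + c₁` for `x > 0`, `f₁(x) = c₁` for `x ≤ 0`, on
`[a,b]` with `a < 0 < b`. -/
theorem stmt8 (a b c1 : ℝ) (ha : a < 0) (hb : 0 < b) :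
    ¬ ∃ (n : ℕ) (w dl taux : Fin (n+1) → ℝ) (θ : ℝ),
      0 < θ ∧ (∀ i, 0 ≤ dl i) ∧
      ∀ x ∈ Set.Icc a b,
        FiresAt w dl θ (fun i => if i = 0 then x else taux i)
          (if 0 < x then x + c1 else c1) := by
  rintro ⟨n, w, dl, taux, θ, hθ, hdl, hf⟩
  classical
  simp only [FiresAt] at hf
  choose! S hSne hSW hlt hge hEq using hf
  -- a helper to split the sum when 0 ∈ S
  have split : ∀ (T : Finset (Fin (n+1))), (0 : Fin (n+1)) ∈ T → ∀ x : ℝ,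
      ∑ i ∈ T, w i * ((if i = 0 then x else taux i) + dl i)
        = w 0 * (x + dl 0) + ∑ i ∈ T.erase 0, w i * (taux i + dl i) := by
    intro T h0 x
    rw [← Finset.add_sum_erase _ _ h0,
      show (if (0:Fin (n+1)) = 0 then x else taux 0) = x from if_pos rfl]
    refine congrArg _ (Finset.sum_congr rfl fun i hi => ?_)
    rw [if_neg (Finset.mem_erase.mp hi).1]
  -- a helper when 0 ∉ S: the sum is constant in x
  have const : ∀ (T : Finset (Fin (n+1))), (0 : Fin (n+1)) ∉ T → ∀ x : ℝ,
      ∑ i ∈ T, w i * ((if i = 0 then x else taux i) + dl i)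
        = ∑ i ∈ T, w i * (taux i + dl i) := by
    intro T h0 x
    refine Finset.sum_congr rfl fun i hi => ?_
    rw [if_neg (fun h : i = 0 => h0 (h ▸ hi))]
  -- pigeonhole on the positive side
  have hsub1 : Set.Ioc (0:ℝ) b ⊆ Set.Icc a b := fun x hx =>
    ⟨le_trans ha.le hx.1.le, hx.2⟩
  have hinf1 : (Set.Ioc (0:ℝ) b).Infinite :=
    (Set.Ioo_infinite hb).mono Set.Ioo_subset_Ioc_self
  obtain ⟨x₁, hx₁, x₂, hx₂, hne12, hS12⟩ :=
    hinf1.exists_ne_map_eq_of_mapsTo (f := S) (Set.mapsTo_univ _ _) Set.finite_univ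
  have hm₁ := hsub1 hx₁
  have hm₂ := hsub1 hx₂
  have hW₁ := hSW x₁ hm₁
  have e1 := hEq x₁ hm₁
  have e2 := hEq x₂ hm₂
  rw [if_pos hx₁.1, eq_div_iff (ne_of_gt hW₁)] at e1
  rw [if_pos hx₂.1, ← hS12, eq_div_iff (ne_of_gt hW₁)] at e2
  -- 0 must belong to S x₁
  have h0 : (0 : Fin (n+1)) ∈ S x₁ := by
    by_contra h0
    rw [const _ h0] at e1 e2
    exact hne12 (mul_right_cancel₀ (ne_of_gt hW₁) (by linarith))
  rw [split _ h0] at e1 e2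
  -- hence w 0 equals the total weight
  have hw0 : w 0 = ∑ i ∈ S x₁, w i := by
    have hz : (x₁ - x₂) * ((∑ i ∈ S x₁, w i) - w 0) = 0 := by linarith
    rcases mul_eq_zero.mp hz with h | h
    · exact absurd (sub_eq_zero.mp h) hne12
    · linarith [sub_eq_zero.mp h]
  have hw0pos : 0 < w 0 := hw0 ▸ hW₁
  -- causality at x₁ gives dl 0 < c1
  have hd0 : dl 0 < c1 := by
    have := hlt x₁ hm₁ 0 h0
    rw [if_pos hx₁.1, if_pos rfl] at this
    linarith
  -- pigeonhole on the negative side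
  have hsub2 : Set.Ico a (0:ℝ) ⊆ Set.Icc a b := fun x hx =>
    ⟨hx.1, le_trans hx.2.le hb.le⟩
  have hinf2 : (Set.Ico a (0:ℝ)).Infinite :=
    (Set.Ioo_infinite ha).mono Set.Ioo_subset_Ico_self
  obtain ⟨x₃, hx₃, x₄, hx₄, hne34, hS34⟩ :=
    hinf2.exists_ne_map_eq_of_mapsTo (f := S) (Set.mapsTo_univ _ _) Set.finite_univ
  have hm₃ := hsub2 hx₃
  have hm₄ := hsub2 hx₄
  have hW₃ := hSW x₃ hm₃
  have e3 := hEq x₃ hm₃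
  have e4 := hEq x₄ hm₄
  rw [if_neg (not_lt.mpr hx₃.2.le), eq_div_iff (ne_of_gt hW₃)] at e3
  rw [if_neg (not_lt.mpr hx₄.2.le), ← hS34, eq_div_iff (ne_of_gt hW₃)] at e4
  by_cases h0' : (0 : Fin (n+1)) ∈ S x₃
  · -- then w 0 * (x₃ - x₄) = 0, so w 0 = 0, contradiction
    rw [split _ h0'] at e3 e4
    have hz : w 0 * (x₃ - x₄) = 0 := by linarith
    rcases mul_eq_zero.mp hz with h | h
    · linarith
    · exact hne34 (sub_eq_zero.mp h)
  · -- causality: c1 ≤ x₃ + dl 0 with x₃ < 0, dl 0 < c1, contradiction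
    have := hge x₃ hm₃ 0 h0'
    rw [if_neg (not_lt.mpr hx₃.2.le), if_pos rfl] at this
    linarith [hx₃.2]
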